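/- arXiv:1811.00710 — 4 statements merged into one kernel-verified Lean document; each statement's English description precedes it below -/
import Mathlib

section
/- If H is biregular (all vertices of U have the same degree and all vertices of V have the same degree) and the label cover instance G has a labeling covering at least a c fraction of its edges, then the composed instance G' has a labeling covering at least a c fraction of its edges. -/
/-!
Give every vertex `(b, v)` the label of `b`. Since `Einv b` is injective, an edge `(a, b)` of `G`
comes from exactly one `u`, so it spawns exactly one edge `(a, (b, v))` of `G'` for each of the
`ΔH` neighbours `v` of `u` in `H`; and such an edge is covered exactly when `(a, b)` is. Hence both
the number of edges and the number of covered edges get multiplied by `ΔH`.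
-/

open Finset

section Composition

variable {A B U V : Type} [Fintype U] [Fintype V] [DecidableEq A]

lemma filter_exists_eq_filter_of_injective {Einv : B → U → A} (EH : U → V → Bool) {a : A} {b : B}
    {u₀ : U} (hinj : Function.Injective (Einv b)) (hu₀ : Einv b u₀ = a) :
    (univ.filter fun v => ∃ u, Einv b u = a ∧ EH u v) = univ.filter fun v => EH u₀ v := by
  ext v
  simp only [mem_filter, mem_univ, true_and]
  constructor
  · rintro ⟨u, hu, huv⟩
    rwa [← hinj (hu.trans hu₀.symm)]
  · exact fun hv => ⟨u₀, hu₀, hv⟩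

variable [Fintype A] [Fintype B]

def composedEdges (Einv : B → U → A) (EH : U → V → Bool) : Finset (A × B × V) :=
  univ.filter fun p => ∃ u, Einv p.2.1 u = p.1 ∧ EH u p.2.2

variable (E : Finset (A × B)) (Einv : B → U → A)
  (hinj : ∀ b, Function.Injective (Einv b)) (hnbr : ∀ a b, (a, b) ∈ E ↔ ∃ u, Einv b u = a)
  (EH : U → V → Bool) {ΔH : ℕ} (hHdegU : ∀ u, (univ.filter fun v => EH u v).card = ΔH)
include hinj hnbr hHdegU

lemma card_filter_composedEdges (Q : A → B → Prop) [∀ a b, Decidable (Q a b)] :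
    ((composedEdges Einv EH).filter fun p => Q p.1 p.2.1).card
      = (E.filter fun e => Q e.1 e.2).card * ΔH := by
  classical
  have hmaps : ∀ p ∈ (composedEdges Einv EH).filter (fun p => Q p.1 p.2.1),
      (p.1, p.2.1) ∈ E.filter fun e => Q e.1 e.2 := by
    simp only [composedEdges, mem_filter, mem_univ, true_and]
    rintro p ⟨⟨u, hu, -⟩, hQ⟩
    exact ⟨(hnbr _ _).mpr ⟨u, hu⟩, hQ⟩
  rw [card_eq_sum_card_fiberwise hmaps, sum_const_nat]
  rintro ⟨a, b⟩ hab
  obtain ⟨hE, hQ⟩ := mem_filter.mp hab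
  obtain ⟨u₀, hu₀⟩ := (hnbr a b).mp hE
  have hfiber : ((composedEdges Einv EH).filter fun p => Q p.1 p.2.1).filter
        (fun p => (p.1, p.2.1) = (a, b))
      = (univ.filter fun v => ∃ u, Einv b u = a ∧ EH u v).image fun v => (a, b, v) := by
    ext ⟨a', b', v⟩
    simp only [composedEdges, mem_filter, mem_univ, true_and, mem_image, Prod.mk.injEq]
    constructor
    · rintro ⟨⟨hv, -⟩, rfl, rfl⟩
      exact ⟨v, hv, rfl, rfl, rfl⟩
    · rintro ⟨w, hw, rfl, rfl, rfl⟩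
      exact ⟨⟨hw, hQ⟩, rfl, rfl⟩
  rw [hfiber, card_image_of_injective _ fun _ _ h => (Prod.mk.inj (Prod.mk.inj h).2).2,
    filter_exists_eq_filter_of_injective EH (hinj b) hu₀, hHdegU]

lemma card_composedEdges : (composedEdges Einv EH).card = E.card * ΔH := by
  simpa using card_filter_composedEdges E Einv hinj hnbr EH hHdegU fun _ _ => True

end Composition

theorem stmt_1_general
    {A B SA SB U V : Type} [Fintype A] [Fintype B] [Fintype U] [Fintype V]
    [DecidableEq A] [DecidableEq SB]
    (E : Finset (A × B)) (π : A → B → SA → SB)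
    (Einv : B → U → A)
    (hinj : ∀ b, Function.Injective (Einv b))
    (hnbr : ∀ a b, (a, b) ∈ E ↔ ∃ u, Einv b u = a)
    (EH : U → V → Bool)
    (ΔH : ℕ) (hHdegU : ∀ u, (univ.filter (fun v => EH u v)).card = ΔH)
    (c : ℝ)
    (hcov : ∃ (φA : A → SA) (φB : B → SB),
      c * E.card ≤ ((E.filter (fun e => π e.1 e.2 (φA e.1) = φB e.2)).card : ℝ)) :
    ∃ (φA : A → SA) (φB : B × V → SB),
      c * ((univ.filter (fun p : A × B × V =>
            ∃ u, Einv p.2.1 u = p.1 ∧ EH u p.2.2)).card : ℝ) ≤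
        (((univ.filter (fun p : A × B × V =>
            ∃ u, Einv p.2.1 u = p.1 ∧ EH u p.2.2)).filter
            (fun p => π p.1 p.2.1 (φA p.1) = φB p.2)).card : ℝ) := by
  classical
  obtain ⟨φA, φB, hcov⟩ := hcov
  refine ⟨φA, fun p => φB p.1, ?_⟩
  have hall := card_composedEdges E Einv hinj hnbr EH hHdegU
  have hcovered := card_filter_composedEdges E Einv hinj hnbr EH hHdegU
    fun a b => π a b (φA a) = φB b
  unfold composedEdges at hall hcovered
  rw [hall, hcovered, Nat.cast_mul, Nat.cast_mul, ← mul_assoc]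
  gcongr

/-- completeness of the composition: if `H` is biregular and the
label cover instance `G` has a labeling covering at least a `c` fraction of its
edges, then the composed instance `G'` (with bipartition `(A, B × V)`, an edge
`(a,(b,v))` whenever `∃ u, E⁻(b,u) = a ∧ (u,v) ∈ E_H`, and projection
`π_{(a,(b,v))} = π_{(a,b)}`) has a labeling covering at least a `c` fraction of
its edges.  `SA`/`SB` denote the alphabets `Σ_A`/`Σ_B`. -/
theorem stmt_1
    {A B SA SB U V : Type} [Fintype A] [Fintype B] [Fintype U] [Fintype V]
    [DecidableEq A] [DecidableEq SB]
    (E : Finset (A × B)) (π : A → B → SA → SB)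
    (Einv : B → U → A)
    (hinj : ∀ b, Function.Injective (Einv b))
    (hnbr : ∀ a b, (a, b) ∈ E ↔ ∃ u, Einv b u = a)
    (EH : U → V → Bool)
    (ΔH : ℕ) (hHdegU : ∀ u, (univ.filter (fun v => EH u v)).card = ΔH)
    (D : ℕ) (hHdegV : ∀ v, (univ.filter (fun u => EH u v)).card = D)
    (c : ℝ)
    (hcov : ∃ (φA : A → SA) (φB : B → SB),
      c * E.card ≤ ((E.filter (fun e => π e.1 e.2 (φA e.1) = φB e.2)).card : ℝ)) :
    ∃ (φA : A → SA) (φB : B × V → SB),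
      c * ((univ.filter (fun p : A × B × V =>
            ∃ u, Einv p.2.1 u = p.1 ∧ EH u p.2.2)).card : ℝ) ≤
        (((univ.filter (fun p : A × B × V =>
            ∃ u, Einv p.2.1 u = p.1 ∧ EH u p.2.2)).filter
            (fun p => π p.1 p.2.1 (φA p.1) = φB p.2)).card : ℝ) :=
  stmt_1_general E π Einv hinj hnbr EH ΔH hHdegU c hcov
end

section
/- Suppose H = (U, V, E_H) satisfies: for every partition of U into parts each of size at most ε·|U|, the fraction of vertices v ∈ V with more than one neighbor inside a single part is at most ε·D². If every labeling of G covers at most an ε²·D² fraction of the edges of G, then the composed instance G' has agreement soundness error 2ε·D²; that is, for every φ_A : A → Σ_A, the fraction of vertices (b, v) ∈ B × V on which the A-vertices of G' do not totally disagree is at most 2ε·D². -/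
open Finset

/-!
Fix `φ_A` and decode `φ_B(b)` as the most frequent label `π_{(a,b)}(φ_A(a))` induced at `b` by its
neighbours. Call `b` heavy if that label is induced by more than `ε|U|` neighbours: each heavy `b`
then contributes more than `ε|U|` covered edges, so soundness of `G` leaves at most `ε D² |B|` heavy
vertices. At a light `b` the fibres of the induced labelling `U → Σ_B` partition `U` into parts of
size at most `ε|U|`, and `(b, v)` can only fail to totally disagree if `v` has two `H`-neighbours in
one part, which the property of `H` allows for at most `ε D² |V|` vertices `v`.
-/

lemma mul_card_filter_lt_le_sum {ι : Type*} [Fintype ι] (w : ι → ℝ) (hw : ∀ i, 0 ≤ w i) (t : ℝ) :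
    t * #{i | t < w i} ≤ ∑ i, w i := by
  classical
  calc t * #{i | t < w i} = ∑ _i ∈ {i | t < w i}, t := by rw [sum_const, nsmul_eq_mul, mul_comm]
    _ ≤ ∑ i ∈ {i | t < w i}, w i := sum_le_sum fun i hi => (mem_filter.mp hi).2.le
    _ ≤ ∑ i, w i := sum_le_sum_of_subset_of_nonneg (subset_univ _) fun i _ _ => hw i

lemma sum_le_card_mul_add_card_mul {ι : Type*} [Fintype ι] (w : ι → ℝ)
    (S : Finset ι) {M c : ℝ} (hc : 0 ≤ c) (hM : ∀ i, w i ≤ M) (hS : ∀ i ∉ S, w i ≤ c) :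
    ∑ i, w i ≤ #S * M + Fintype.card ι * c := by
  classical
  calc ∑ i, w i ≤ ∑ i, ((if i ∈ S then M else 0) + c) := by
        refine sum_le_sum fun i _ => ?_
        split_ifs with hi
        · linarith [hM i]
        · linarith [hS i hi]
    _ = #S * M + Fintype.card ι * c := by
        rw [sum_add_distrib, sum_ite_mem, univ_inter, sum_const, sum_const, nsmul_eq_mul,
          nsmul_eq_mul, card_univ]

lemma card_filter_prod {B V : Type*} [Fintype B] [Fintype V] (Q : B → V → Prop)
    [∀ b v, Decidable (Q b v)] :
    #{bv : B × V | Q bv.1 bv.2} = ∑ b, #{v | Q b v} := by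
  simp only [card_filter, Fintype.sum_prod_type]

section Collision

variable {U V β : Type*} [Fintype U] [Fintype V] [DecidableEq U]

lemma card_part_ofSetoid_ker_le [DecidableEq β] (g : U → β) {t : ℝ}
    (hg : ∀ u, (#{u' | g u' = g u} : ℝ) ≤ t) :
    ∀ p ∈ (Finpartition.ofSetoid (Setoid.ker g)).parts, (#p : ℝ) ≤ t := by
  intro p hp
  obtain ⟨u, -, rfl⟩ := (Finpartition.ofSetoid (Setoid.ker g)).part_surjOn hp
  convert hg u using 3
  ext u'
  rw [Finpartition.mem_part_ofSetoid_iff_rel, mem_filter]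
  simp [eq_comm]

def HasCollisionAt (EH : U → V → Bool) (g : U → β) (v : V) : Prop :=
  ∃ u u', u ≠ u' ∧ EH u v ∧ EH u' v ∧ g u = g u'

instance [DecidableEq β] (EH : U → V → Bool) (g : U → β) : DecidablePred (HasCollisionAt EH g) :=
  fun _ => by unfold HasCollisionAt; infer_instance

lemma card_hasCollisionAt_le [DecidableEq β] (EH : U → V → Bool) (g : U → β) {t c : ℝ}
    (hH : ∀ P : Finpartition (univ : Finset U), (∀ p ∈ P.parts, (#p : ℝ) ≤ t) →
      (#{v | ∃ p ∈ P.parts, 1 < #(p.filter (fun u => EH u v))} : ℝ) ≤ c)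
    (hg : ∀ u, (#{u' | g u' = g u} : ℝ) ≤ t) :
    (#{v | HasCollisionAt EH g v} : ℝ) ≤ c := by
  set P := Finpartition.ofSetoid (Setoid.ker g)
  refine le_trans ?_ (hH P (card_part_ofSetoid_ker_le g hg))
  gcongr with v
  rintro ⟨u, u', hne, hu, hu', hgu⟩
  refine ⟨P.part u, P.part_mem.mpr (mem_univ u), one_lt_card.mpr ⟨u, ?_, u', ?_, hne⟩⟩
  · exact mem_filter.mpr ⟨P.mem_part (mem_univ u), hu⟩
  · exact mem_filter.mpr ⟨Finpartition.mem_part_ofSetoid_iff_rel.mpr hgu, hu'⟩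

end Collision

section LabelCover

variable {A B U : Type*} [Fintype B] [Fintype U] {E : Finset (A × B)} {Einv : B → U → A}

@[simps]
def edgeEmbedding (hinj : ∀ b, Function.Injective (Einv b)) : B × U ↪ A × B where
  toFun bu := (Einv bu.1 bu.2, bu.1)
  inj' := by
    rintro ⟨b, u⟩ ⟨b', u'⟩ h
    obtain ⟨ha, rfl : b = b'⟩ := Prod.mk.inj h
    exact congrArg _ (hinj b ha)

lemma edges_eq_map (hinj : ∀ b, Function.Injective (Einv b))
    (hnbr : ∀ a b, (a, b) ∈ E ↔ ∃ u, Einv b u = a) :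
    E = univ.map (edgeEmbedding hinj) := by
  ext ⟨a, b⟩
  simp [hnbr]

lemma card_filter_edges (hinj : ∀ b, Function.Injective (Einv b))
    (hnbr : ∀ a b, (a, b) ∈ E ↔ ∃ u, Einv b u = a) (p : A → B → Prop) [∀ a b, Decidable (p a b)] :
    #(E.filter fun e => p e.1 e.2) = ∑ b, #{u | p (Einv b u) b} := by
  rw [edges_eq_map hinj hnbr, filter_map, card_map, ← card_filter_prod]
  rfl

lemma card_edges (hinj : ∀ b, Function.Injective (Einv b))
    (hnbr : ∀ a b, (a, b) ∈ E ↔ ∃ u, Einv b u = a) :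
    #E = Fintype.card B * Fintype.card U := by
  rw [edges_eq_map hinj hnbr, card_map, card_univ, Fintype.card_prod]

def inducedLabel {SA SB : Type*} (π : A → B → SA → SB) (Einv : B → U → A) (φA : A → SA) (b : B)
    (u : U) : SB :=
  π (Einv b u) b (φA (Einv b u))

variable {SA SB : Type*} [DecidableEq SB] {π : A → B → SA → SB}

lemma mul_card_heavy_le (hinj : ∀ b, Function.Injective (Einv b))
    (hnbr : ∀ a b, (a, b) ∈ E ↔ ∃ u, Einv b u = a) (φA : A → SA) (φB : B → SB) (t : ℝ) :
    t * #{b | t < (#{u | inducedLabel π Einv φA b u = φB b} : ℝ)} ≤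
      #(E.filter fun e => π e.1 e.2 (φA e.1) = φB e.2) := by
  refine (mul_card_filter_lt_le_sum _ (fun _ => by positivity) t).trans_eq ?_
  rw [card_filter_edges hinj hnbr (fun a b => π a b (φA a) = φB b), Nat.cast_sum]
  rfl

lemma card_not_totallyDisagree_le_sum [Fintype A] [DecidableEq A] [DecidableEq U] {V : Type*}
    [Fintype V] (EH : U → V → Bool) (φA : A → SA) :
    #{bv : B × V | ∃ a1 a2 : A, a1 ≠ a2 ∧ (∃ u, Einv bv.1 u = a1 ∧ EH u bv.2) ∧
        (∃ u, Einv bv.1 u = a2 ∧ EH u bv.2) ∧ π a1 bv.1 (φA a1) = π a2 bv.1 (φA a2)} ≤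
      ∑ b, #{v | HasCollisionAt EH (inducedLabel π Einv φA b) v} := by
  rw [← card_filter_prod fun b => HasCollisionAt EH (inducedLabel π Einv φA b)]
  gcongr with bv
  rintro ⟨-, -, hne, ⟨u, rfl, hu⟩, ⟨u', rfl, hu'⟩, hf⟩
  exact ⟨u, u', fun h => hne (h ▸ rfl), hu, hu', hf⟩

end LabelCover

theorem stmt_2_general
    {A B SA SB U V : Type} [Fintype A] [Fintype B] [Fintype U] [Fintype V]
    [DecidableEq A] [DecidableEq U] [DecidableEq SB]
    (E : Finset (A × B)) (π : A → B → SA → SB)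
    (Einv : B → U → A)
    (hinj : ∀ b, Function.Injective (Einv b))
    (hnbr : ∀ a b, (a, b) ∈ E ↔ ∃ u, Einv b u = a)
    (EH : U → V → Bool)
    (D : ℕ)
    (ε : ℝ) (hε : 0 < ε)
    (hH : ∀ P : Finpartition (univ : Finset U),
      (∀ p ∈ P.parts, (p.card : ℝ) ≤ ε * Fintype.card U) →
      ((univ.filter (fun v : V =>
          ∃ p ∈ P.parts, 1 < (p.filter (fun u => EH u v)).card)).card : ℝ)
        ≤ ε * (D : ℝ) ^ 2 * Fintype.card V)
    (hsound : ∀ (φA : A → SA) (φB : B → SB),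
      ((E.filter (fun e => π e.1 e.2 (φA e.1) = φB e.2)).card : ℝ)
        ≤ ε ^ 2 * (D : ℝ) ^ 2 * E.card) :
    ∀ φA : A → SA,
      ((univ.filter (fun bv : B × V => ∃ a1 a2 : A, a1 ≠ a2 ∧
          (∃ u, Einv bv.1 u = a1 ∧ EH u bv.2) ∧
          (∃ u, Einv bv.1 u = a2 ∧ EH u bv.2) ∧
          π a1 bv.1 (φA a1) = π a2 bv.1 (φA a2))).card : ℝ)
        ≤ 2 * ε * (D : ℝ) ^ 2 * ((Fintype.card B : ℝ) * Fintype.card V) := by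
  intro φA
  rcases isEmpty_or_nonempty U with hU | hU
  · simp only [IsEmpty.exists_iff, false_and, and_false, exists_false, filter_false, card_empty,
      Nat.cast_zero]
    positivity
  set f := inducedLabel π Einv φA
  choose top _ htop using fun b =>
    exists_max_image univ (fun u => #{u' | f b u' = f b u}) univ_nonempty
  set Big : Finset B := {b | ε * Fintype.card U < (#{u | f b u = f b (top b)} : ℝ)}
  have hBig : (#Big : ℝ) ≤ ε * D ^ 2 * Fintype.card B := by
    refine le_of_mul_le_mul_left ?_ (by positivity : 0 < ε * Fintype.card U)
    calc ε * Fintype.card U * #Big ≤ _ := mul_card_heavy_le hinj hnbr φA (fun b => f b (top b)) _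
      _ ≤ ε ^ 2 * D ^ 2 * #E := hsound φA (fun b => f b (top b))
      _ = ε * Fintype.card U * (ε * D ^ 2 * Fintype.card B) := by
          rw [card_edges hinj hnbr]
          push_cast
          ring
  have hlight : ∀ b ∉ Big,
      (#{v | HasCollisionAt EH (f b) v} : ℝ) ≤ ε * D ^ 2 * Fintype.card V := by
    intro b hb
    simp only [Big, mem_filter, mem_univ, true_and, not_lt] at hb
    exact card_hasCollisionAt_le EH (f b) hH fun u => le_trans (mod_cast htop b u (mem_univ u)) hb
  calc _ ≤ ∑ b, (#{v | HasCollisionAt EH (f b) v} : ℝ) :=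
        mod_cast card_not_totallyDisagree_le_sum EH φA
    _ ≤ #Big * Fintype.card V + Fintype.card B * (ε * D ^ 2 * Fintype.card V) :=
        sum_le_card_mul_add_card_mul _ _ (by positivity) (fun b => mod_cast card_le_univ _) hlight
    _ ≤ 2 * ε * (D : ℝ) ^ 2 * ((Fintype.card B : ℝ) * Fintype.card V) := by
        nlinarith [hBig, (Fintype.card V).cast_nonneg (α := ℝ)]

/-- soundness of the composition: if `H = (U,V,E_H)` has the
partition property (for every partition of `U` into parts of size at most
`ε|U|`, at most an `ε·D²` fraction of `v ∈ V` have more than one neighbor inside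
a single part) and every labeling of `G` covers at most an `ε²·D²` fraction of
its edges, then the composed instance `G'` has agreement soundness error
`2ε·D²`: for every `φ_A : A → Σ_A`, the fraction of vertices `(b,v) ∈ B × V` on
which the `A`-vertices do not totally disagree is at most `2ε·D²`.
`SA`/`SB` denote the alphabets `Σ_A`/`Σ_B`. -/
theorem stmt_2
    {A B SA SB U V : Type} [Fintype A] [Fintype B] [Fintype U] [Fintype V]
    [DecidableEq A] [DecidableEq U] [DecidableEq SB]
    (E : Finset (A × B)) (π : A → B → SA → SB)
    (Einv : B → U → A)
    (hinj : ∀ b, Function.Injective (Einv b))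
    (hnbr : ∀ a b, (a, b) ∈ E ↔ ∃ u, Einv b u = a)
    (EH : U → V → Bool)
    (D : ℕ) (hHdegV : ∀ v, (univ.filter (fun u => EH u v)).card = D)
    (ε : ℝ) (hε : 0 < ε)
    (hH : ∀ P : Finpartition (univ : Finset U),
      (∀ p ∈ P.parts, (p.card : ℝ) ≤ ε * Fintype.card U) →
      ((univ.filter (fun v : V =>
          ∃ p ∈ P.parts, 1 < (p.filter (fun u => EH u v)).card)).card : ℝ)
        ≤ ε * (D : ℝ) ^ 2 * Fintype.card V)
    (hsound : ∀ (φA : A → SA) (φB : B → SB),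
      ((E.filter (fun e => π e.1 e.2 (φA e.1) = φB e.2)).card : ℝ)
        ≤ ε ^ 2 * (D : ℝ) ^ 2 * E.card) :
    ∀ φA : A → SA,
      ((univ.filter (fun bv : B × V => ∃ a1 a2 : A, a1 ≠ a2 ∧
          (∃ u, Einv bv.1 u = a1 ∧ EH u bv.2) ∧
          (∃ u, Einv bv.1 u = a2 ∧ EH u bv.2) ∧
          π a1 bv.1 (φA a1) = π a2 bv.1 (φA a2))).card : ℝ)
        ≤ 2 * ε * (D : ℝ) ^ 2 * ((Fintype.card B : ℝ) * Fintype.card V) :=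
  stmt_2_general E π Einv hinj hnbr EH D ε hε hH hsound
end

section
/- Let ℓ ≥ 1 be an integer and 0 < ε' < 1. Any label cover instance with agreement soundness error ε' has list-agreement soundness error (ℓ, ε'·ℓ²); that is, if for every single assignment φ_A : A → Σ_A the A-vertices totally disagree on at least a (1−ε') fraction of the vertices b ∈ B, then for every list assignment φ̂_A : A → (subsets of Σ_A of size ℓ), the A-vertices are in list total disagreement on at least a (1−ε'·ℓ²) fraction of the vertices b ∈ B. -/
open Finset

/-- Lemma 4.7 of Moshkovitz: a label cover instance with agreement
soundness error `ε'` has list-agreement soundness error `(ℓ, ε'·ℓ²)`.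
`SA`/`SB` denote the alphabets `Σ_A`/`Σ_B`; a vertex `b` on which the
`A`-vertices do *not* (list) totally disagree is one admitting two distinct
neighbors whose (list) labels project to a common value. -/
theorem stmt_3
    {A B SA SB : Type} [Fintype A] [Fintype B]
    [DecidableEq A] [DecidableEq B] [DecidableEq SB]
    (E : Finset (A × B)) (π : A → B → SA → SB)
    (ℓ : ℕ) (hℓ : 1 ≤ ℓ) (ε' : ℝ) (hε0 : 0 < ε') (hε1 : ε' < 1)
    (hsound : ∀ φA : A → SA,
      ((univ.filter (fun b : B => ∃ a1 a2 : A, a1 ≠ a2 ∧ (a1, b) ∈ E ∧ (a2, b) ∈ E ∧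
          π a1 b (φA a1) = π a2 b (φA a2))).card : ℝ) ≤ ε' * Fintype.card B) :
    ∀ φhat : A → Finset SA, (∀ a, (φhat a).card = ℓ) →
      ((univ.filter (fun b : B => ∃ a1 a2 : A, a1 ≠ a2 ∧ (a1, b) ∈ E ∧ (a2, b) ∈ E ∧
          ∃ σ1 ∈ φhat a1, ∃ σ2 ∈ φhat a2,
            π a1 b σ1 = π a2 b σ2)).card : ℝ) ≤ ε' * (ℓ : ℝ) ^ 2 * Fintype.card B := by
  classical
  intro φhat hφ
  set n := Fintype.card A with hn
  set Φ : Finset (A → SA) := Fintype.piFinset (fun a => φhat a) with hΦ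
  have hΦcard : Φ.card = ℓ ^ n := by
    rw [hΦ, Fintype.card_piFinset]
    simp [hφ, hn]
  set P : (A → SA) → B → Prop := fun φ b => ∃ a1 a2 : A, a1 ≠ a2 ∧ (a1, b) ∈ E ∧
      (a2, b) ∈ E ∧ π a1 b (φ a1) = π a2 b (φ a2) with hP
  -- per-vertex counting bound
  have key : ∀ b : B, (∃ a1 a2 : A, a1 ≠ a2 ∧ (a1, b) ∈ E ∧ (a2, b) ∈ E ∧
      ∃ σ1 ∈ φhat a1, ∃ σ2 ∈ φhat a2, π a1 b σ1 = π a2 b σ2) →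
      ℓ ^ n ≤ ℓ ^ 2 * (Φ.filter (fun φ => P φ b)).card := by
    rintro b ⟨a1, a2, h12, hE1, hE2, σ1, hσ1, σ2, hσ2, hπ⟩
    set c : A → Finset SA := fun a => if a = a1 then {σ1} else if a = a2 then {σ2} else φhat a
      with hc
    have hsub : Fintype.piFinset c ⊆ Φ.filter (fun φ => P φ b) := by
      intro φ hφmem
      rw [Fintype.mem_piFinset] at hφmem
      have h1 : φ a1 = σ1 := by have := hφmem a1; simp [hc] at this; exact this
      have h2 : φ a2 = σ2 := by have := hφmem a2; simp [hc, Ne.symm h12] at this; exact this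
      refine mem_filter.mpr ⟨?_, a1, a2, h12, hE1, hE2, by rw [h1, h2]; exact hπ⟩
      rw [hΦ, Fintype.mem_piFinset]
      intro a
      by_cases ha1 : a = a1
      · subst ha1; rw [h1]; exact hσ1
      by_cases ha2 : a = a2
      · subst ha2; rw [h2]; exact hσ2
      · have := hφmem a; simp [hc, ha1, ha2] at this; exact this
    have e1 : ∀ f : A → ℕ, ∏ a, f a = f a1 * (f a2 * ∏ a ∈ (univ.erase a1).erase a2, f a) := by
      intro f
      rw [← Finset.mul_prod_erase univ f (mem_univ a1),
          ← Finset.mul_prod_erase (univ.erase a1) f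
            (Finset.mem_erase.mpr ⟨Ne.symm h12, mem_univ a2⟩)]
    have hcard : ℓ ^ 2 * (Fintype.piFinset c).card = ℓ ^ n := by
      rw [Fintype.card_piFinset]
      have e2 : ∏ a, (c a).card = ∏ a ∈ (univ.erase a1).erase a2, (φhat a).card := by
        rw [e1 (fun a => (c a).card)]
        simp only [hc, if_pos rfl, if_neg (Ne.symm h12), if_true, Finset.card_singleton, one_mul]
        apply Finset.prod_congr rfl
        intro a ha
        rw [mem_erase, mem_erase] at ha
        rw [if_neg ha.2.1, if_neg ha.1]
      have e3 : ℓ ^ n = ∏ a, (φhat a).card := by simp [hφ, hn]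
      rw [e2, e3, e1 (fun a => (φhat a).card), hφ a1, hφ a2]
      ring
    calc ℓ ^ n = ℓ ^ 2 * (Fintype.piFinset c).card := hcard.symm
      _ ≤ _ := Nat.mul_le_mul_left _ (Finset.card_le_card hsub)
  -- double counting
  set T : ℕ := ∑ b : B, (Φ.filter (fun φ => P φ b)).card with hT
  have hswap : ∑ φ ∈ Φ, (univ.filter (fun b => P φ b)).card = T := by
    rw [hT]
    simp only [Finset.card_filter]
    exact Finset.sum_comm
  set Q : Finset B := univ.filter (fun b : B => ∃ a1 a2 : A, a1 ≠ a2 ∧ (a1, b) ∈ E ∧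
      (a2, b) ∈ E ∧ ∃ σ1 ∈ φhat a1, ∃ σ2 ∈ φhat a2, π a1 b σ1 = π a2 b σ2) with hQ
  have hmain : Q.card * ℓ ^ n ≤ ℓ ^ 2 * T := by
    calc Q.card * ℓ ^ n = ∑ _b ∈ Q, ℓ ^ n := by rw [Finset.sum_const, smul_eq_mul]
      _ ≤ ∑ b ∈ Q, ℓ ^ 2 * (Φ.filter (fun φ => P φ b)).card := by
          apply Finset.sum_le_sum
          intro b hb
          exact key b (mem_filter.mp hb).2
      _ ≤ ∑ b : B, ℓ ^ 2 * (Φ.filter (fun φ => P φ b)).card :=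
          Finset.sum_le_sum_of_subset (subset_univ _)
      _ = ℓ ^ 2 * T := by rw [hT, Finset.mul_sum]
  have hTub : (T : ℝ) ≤ (ℓ : ℝ) ^ n * (ε' * Fintype.card B) := by
    rw [← hswap]
    push_cast
    calc ∑ φ ∈ Φ, ((univ.filter (fun b => P φ b)).card : ℝ)
        ≤ ∑ _φ ∈ Φ, ε' * Fintype.card B := by
          apply Finset.sum_le_sum
          intro φ _
          exact hsound φ
      _ = (ℓ : ℝ) ^ n * (ε' * Fintype.card B) := by
          rw [Finset.sum_const, hΦcard, nsmul_eq_mul]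
          push_cast
          ring
  have hℓn : (0 : ℝ) < (ℓ : ℝ) ^ n := by positivity
  have hfin : (Q.card : ℝ) * (ℓ : ℝ) ^ n ≤ (ε' * (ℓ : ℝ) ^ 2 * Fintype.card B) * (ℓ : ℝ) ^ n := by
    calc (Q.card : ℝ) * (ℓ : ℝ) ^ n ≤ (ℓ : ℝ) ^ 2 * T := by
          have := hmain
          have h' : ((Q.card * ℓ ^ n : ℕ) : ℝ) ≤ ((ℓ ^ 2 * T : ℕ) : ℝ) := by exact_mod_cast this
          push_cast at h'
          exact h'
      _ ≤ (ℓ : ℝ) ^ 2 * ((ℓ : ℝ) ^ n * (ε' * Fintype.card B)) := by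
          apply mul_le_mul_of_nonneg_left hTub (by positivity)
      _ = (ε' * (ℓ : ℝ) ^ 2 * Fintype.card B) * (ℓ : ℝ) ^ n := by ring
  exact le_of_mul_le_mul_right hfin hℓn
end

section
/- If there is a labeling (φ_A, φ_B) of the label cover instance G that covers all edges of G, then the collection of sets { S_{a, φ_A(a)} : a ∈ A } covers the ground set B × U; in particular, the derived set cover instance admits a set cover of size |A|. -/
/-- completeness of the Set Cover reduction: if a labeling
`(φ_A, φ_B)` covers all edges of the label cover instance `G`, then the sets
`S_{a, φ_A(a)} = ⋃ {{b} × P_{π_{(a,b)}(φ_A a)}(i) : (a,b) ∈ E, (a,b) = e_b(i)}`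
for `a ∈ A` cover the ground set `B × U`; in particular the derived set cover
instance admits a set cover of size `|A|`.  `SA`/`SB` denote the alphabets. -/
theorem stmt_5
    {A B SA SB U : Type} [Fintype A] [Fintype B] [Fintype U]
    (E : Set (A × B)) (π : A → B → SA → SB)
    (D : ℕ) (eb : B → Fin D → A)
    (hinj : ∀ b, Function.Injective (eb b))
    (hnbr : ∀ a b, (a, b) ∈ E ↔ ∃ i, eb b i = a)
    (P : SB → Fin D → Set U)
    (hdisj : ∀ σ, ∀ i j : Fin D, i ≠ j → Disjoint (P σ i) (P σ j))
    (hcoverP : ∀ σ, (⋃ i, P σ i) = Set.univ)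
    (φA : A → SA) (φB : B → SB)
    (hcov : ∀ e ∈ E, π e.1 e.2 (φA e.1) = φB e.2) :
    (⋃ a : A, {p : B × U |
        ∃ i, eb p.1 i = a ∧ (a, p.1) ∈ E ∧ p.2 ∈ P (π a p.1 (φA a)) i}) = Set.univ ∧
    ∃ 𝒞 : Finset (A × SA), 𝒞.card ≤ Fintype.card A ∧
      ∀ p : B × U, ∃ q ∈ 𝒞,
        ∃ i, eb p.1 i = q.1 ∧ (q.1, p.1) ∈ E ∧ p.2 ∈ P (π q.1 p.1 q.2) i := by
  have key : ∀ p : B × U, ∃ a : A, ∃ i, eb p.1 i = a ∧ (a, p.1) ∈ E ∧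
      p.2 ∈ P (π a p.1 (φA a)) i := by
    intro ⟨b, u⟩
    have hu : u ∈ ⋃ i, P (φB b) i := by rw [hcoverP]; trivial
    obtain ⟨i, hi⟩ := Set.mem_iUnion.mp hu
    refine ⟨eb b i, i, rfl, (hnbr _ b).mpr ⟨i, rfl⟩, ?_⟩
    rw [hcov (eb b i, b) ((hnbr _ b).mpr ⟨i, rfl⟩)]
    exact hi
  constructor
  · ext p
    simp only [Set.mem_iUnion, Set.mem_setOf_eq, Set.mem_univ, iff_true]
    exact key p
  · classical
    refine ⟨Finset.univ.image (fun a => (a, φA a)), ?_, ?_⟩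
    · exact (Finset.card_image_le).trans (by simp [Finset.card_univ])
    · intro p
      obtain ⟨a, i, h1, h2, h3⟩ := key p
      exact ⟨(a, φA a), Finset.mem_image_of_mem _ (Finset.mem_univ a), i, h1, h2, h3⟩
end
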